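/- Let r > 0, d > 0, θ ∈ (−1, 1), and δ a real number with |δ·d| < r. Then the exact distance r' = √(r² − 2 r δ d θ + δ² d²) satisfies |r' − (r − δ d θ + δ² d² (1 − θ²)/(2r))| ≤ C · (δ d / r)³ · r for some absolute constant C, i.e., the Fresnel (second-order Taylor) approximation error is of third order in δd/r. -/

import Mathlib

/-!
Writing `δ d = r u`, everything scales by `r`, so it suffices to treat `r = 1`, where
`x = 1 - 2uθ + u²` and the Taylor polynomial `a = 1 - uθ + u²(1 - θ²)/2` satisfy
`x - a² = (1 - θ²)(u³θ - u⁴(1 - θ²)/4)`. Hence `|√x - a| = |x - a²| / (√x + a)`, and the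
denominator is at least `1 - θ²` because `√x` and `a` both dominate `1 - uθ`.
-/

open Real

lemma abs_sqrt_sub_le_of_abs_sub_sq_le {x a b c : ℝ} (hx : 0 ≤ x) (hb : 0 < b)
    (hba : b ≤ √x + a) (h : |x - a ^ 2| ≤ c * b) : |√x - a| ≤ c := by
  have hc : 0 ≤ c := nonneg_of_mul_nonneg_left ((abs_nonneg _).trans h) hb
  have hden : 0 < √x + a := hb.trans_le hba
  have hfactor : |√x - a| * (√x + a) = |x - a ^ 2| := by
    rw [← abs_of_pos hden, ← abs_mul]
    congr 1
    linear_combination sq_sqrt hx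
  refine le_of_mul_le_mul_right ?_ hden
  calc |√x - a| * (√x + a) = |x - a ^ 2| := hfactor
    _ ≤ c * b := h
    _ ≤ c * (√x + a) := mul_le_mul_of_nonneg_left hba hc

lemma abs_sqrt_sub_fresnel_le {u θ : ℝ} (hu : |u| ≤ 1) (hθ : |θ| < 1) :
    |√(1 - 2 * u * θ + u ^ 2) - (1 - u * θ + u ^ 2 * (1 - θ ^ 2) / 2)| ≤ 5 / 4 * |u| ^ 3 := by
  have hu2 : u ^ 2 ≤ 1 := by nlinarith [sq_abs u, abs_nonneg u]
  have hθ2 : 0 < 1 - θ ^ 2 := by nlinarith [sq_abs θ, abs_nonneg θ]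
  have hgap : 0 ≤ u ^ 2 * (1 - θ ^ 2) := mul_nonneg (sq_nonneg u) hθ2.le
  have hx : (1 - u * θ) ^ 2 ≤ 1 - 2 * u * θ + u ^ 2 := by nlinarith
  have hsqrt : 1 - u * θ ≤ √(1 - 2 * u * θ + u ^ 2) :=
    (le_abs_self _).trans (sqrt_sq_eq_abs (1 - u * θ) ▸ sqrt_le_sqrt hx)
  refine abs_sqrt_sub_le_of_abs_sub_sq_le ((sq_nonneg _).trans hx) hθ2
    (by nlinarith [sq_nonneg (u - θ)]) ?_
  have hcube : |u ^ 3 * θ| ≤ |u| ^ 3 := by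
    rw [abs_mul, abs_pow]
    exact mul_le_of_le_one_right (by positivity) hθ.le
  have hquartic : |u ^ 4 * (1 - θ ^ 2) / 4| ≤ |u| ^ 3 / 4 := by
    rw [abs_div, abs_mul, abs_pow, abs_of_pos hθ2, abs_of_pos (by norm_num : (0 : ℝ) < 4)]
    gcongr
    calc |u| ^ 4 * (1 - θ ^ 2) ≤ |u| ^ 4 * 1 := by gcongr; linarith [sq_nonneg θ]
      _ ≤ |u| ^ 3 := by rw [mul_one]; exact pow_le_pow_of_le_one (abs_nonneg u) hu (by norm_num)
  calc |1 - 2 * u * θ + u ^ 2 - (1 - u * θ + u ^ 2 * (1 - θ ^ 2) / 2) ^ 2|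
      = |u ^ 3 * θ - u ^ 4 * (1 - θ ^ 2) / 4| * (1 - θ ^ 2) := by
        rw [← abs_of_pos hθ2, ← abs_mul, abs_of_pos hθ2]
        congr 1
        ring
    _ ≤ 5 / 4 * |u| ^ 3 * (1 - θ ^ 2) := by
        gcongr
        linarith [abs_sub (u ^ 3 * θ) (u ^ 4 * (1 - θ ^ 2) / 4)]

lemma abs_sqrt_sub_fresnel_le_of_abs_le {r s θ : ℝ} (hr : 0 < r) (hs : |s| ≤ r) (hθ : |θ| < 1) :
    |√(r ^ 2 - 2 * r * s * θ + s ^ 2) - (r - s * θ + s ^ 2 * (1 - θ ^ 2) / (2 * r))|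
      ≤ 5 / 4 * (|s| / r) ^ 3 * r := by
  obtain ⟨u, rfl⟩ : ∃ u, s = r * u := ⟨s / r, by field_simp⟩
  have hu : |u| ≤ 1 := by
    rwa [abs_mul, abs_of_pos hr, mul_le_iff_le_one_right hr] at hs
  have hsqrt : √(r ^ 2 - 2 * r * (r * u) * θ + (r * u) ^ 2) = r * √(1 - 2 * u * θ + u ^ 2) := by
    rw [← sqrt_sq hr.le, ← sqrt_mul (sq_nonneg r), sqrt_sq hr.le]
    ring_nf
  have htaylor : r - r * u * θ + (r * u) ^ 2 * (1 - θ ^ 2) / (2 * r)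
      = r * (1 - u * θ + u ^ 2 * (1 - θ ^ 2) / 2) := by
    field_simp
  rw [hsqrt, htaylor, ← mul_sub, abs_mul, abs_of_pos hr, abs_mul, abs_of_pos hr,
    mul_div_cancel_left₀ _ hr.ne', mul_comm r]
  exact mul_le_mul_of_nonneg_right (abs_sqrt_sub_fresnel_le hu hθ) hr.le

theorem stmt_3 :
    ∃ C : ℝ, 0 < C ∧ ∀ (r d θ δ : ℝ), 0 < r → 0 < d → -1 < θ → θ < 1 → |δ * d| < r →
      |Real.sqrt (r ^ 2 - 2 * r * δ * d * θ + δ ^ 2 * d ^ 2) -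
          (r - δ * d * θ + δ ^ 2 * d ^ 2 * (1 - θ ^ 2) / (2 * r))|
        ≤ C * (|δ * d| / r) ^ 3 * r := by
  refine ⟨5 / 4, by norm_num, fun r d θ δ hr _ hθ₁ hθ₂ hδd => ?_⟩
  have h := abs_sqrt_sub_fresnel_le_of_abs_le hr hδd.le (abs_lt.mpr ⟨hθ₁, hθ₂⟩)
  convert h using 4 <;> ring
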